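/- Let ŵ ∈ ℝ^d be a global minimizer of the loss L, let C₁ ≥ 0 satisfy ∑_{i=1}^N ‖x_i‖₂ ≤ C₁, and assume ∇L is Lipschitz continuous with constant (1+λ₂)C₁ + λ₃. Then ‖ŵ − P_k ŵ‖₂² ≥ (1 / (((1+λ₂)C₁ + λ₃) · N₁)) · ŵᵀ (I_d − P_k) ∑_{i∈S} ( x_i − m_i(P_k ŵ) ), where I_d is the d×d identity matrix. (Theorem 2 of the paper.) -/

import Mathlib

open scoped RealInnerProductSpace BigOperators

/-!
At the minimizer `ŵ` the gradient vanishes, so the Lipschitz hypothesis bounds `‖∇L(P_k ŵ)‖` by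
`L₀ ‖ŵ - P_k ŵ‖` and Cauchy–Schwarz gives `⟪ŵ - P_k ŵ, ∇L(P_k ŵ)⟫ ≥ -L₀ ‖ŵ - P_k ŵ‖²`.
As `P_k` is a symmetric projection, `ŵ - P_k ŵ` is orthogonal to its range, which contains the
gradients of the `λ₂`- and `λ₃`-terms at `P_k ŵ`; only the unpenalised score
`-(1/N₁) ∑ᵢ (xᵢ - mᵢ(P_k ŵ))` survives the pairing.
-/

open Real

section CoordProj

variable {ι : Type*} [Fintype ι] [DecidableEq ι]

noncomputable def coordProj (K : Finset ι) : EuclideanSpace ℝ ι →L[ℝ] EuclideanSpace ℝ ι :=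
  LinearMap.toContinuousLinearMap
    { toFun := fun w => WithLp.toLp 2 fun a => if a ∈ K then w a else 0
      map_add' := fun v w => by ext a; by_cases ha : a ∈ K <;> simp [ha]
      map_smul' := fun c w => by ext a; by_cases ha : a ∈ K <;> simp [ha] }

theorem coordProj_apply (K : Finset ι) (w : EuclideanSpace ℝ ι) (a : ι) :
    coordProj K w a = if a ∈ K then w a else 0 := rfl

theorem isSymmetricProjection_coordProj (K : Finset ι) :
    (coordProj K : EuclideanSpace ℝ ι →ₗ[ℝ] EuclideanSpace ℝ ι).IsSymmetricProjection where
  isIdempotentElem := by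
    ext w a
    by_cases ha : a ∈ K <;> simp [coordProj_apply, ha]
  isSymmetric v w := by
    simp only [ContinuousLinearMap.coe_coe, PiLp.inner_apply, coordProj_apply]
    refine Finset.sum_congr rfl fun a _ => ?_
    split_ifs <;> simp

end CoordProj

section Gradient

variable {E : Type*} [NormedAddCommGroup E] [InnerProductSpace ℝ E]

theorem LinearMap.IsSymmetricProjection.inner_sub_apply_self_apply {P : E →ₗ[ℝ] E}
    (hP : P.IsSymmetricProjection) (w v : E) : ⟪w - P w, P v⟫ = 0 := by
  rw [← hP.isSymmetric, map_sub, ← Module.End.mul_apply, hP.isIdempotentElem.eq, sub_self,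
    inner_zero_left]

theorem LinearMap.IsSymmetric.inner_sub_apply_right {T : E →ₗ[ℝ] E} (hT : T.IsSymmetric)
    (w v : E) : ⟪w, v - T v⟫ = ⟪w - T w, v⟫ := by
  rw [inner_sub_right, inner_sub_left, hT]

theorem HasFDerivAt.comp_isSymmetric {f : E → ℝ} {g u : E} {P : E →L[ℝ] E}
    (hP : (P : E →ₗ[ℝ] E).IsSymmetric) (hf : HasFDerivAt f (innerSL ℝ g) (P u)) :
    HasFDerivAt (fun w => f (P w)) (innerSL ℝ (P g)) u := by
  refine (hf.comp u P.hasFDerivAt).congr_fderiv ?_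
  ext v
  simpa using (hP g v).symm

variable [CompleteSpace E]

theorem IsLocalMin.gradient_eq_zero {f : E → ℝ} {w : E} (hw : IsLocalMin f w) :
    gradient f w = 0 := by
  simp [gradient, hw.fderiv_eq_zero]

theorem IsLocalMin.neg_mul_sq_le_inner_gradient {f : E → ℝ} {w u : E} {L₀ : ℝ}
    (hw : IsLocalMin f w) (hLip : ‖gradient f w - gradient f u‖ ≤ L₀ * ‖w - u‖) :
    -(L₀ * ‖w - u‖ ^ 2) ≤ ⟪w - u, gradient f u⟫ := by
  rw [hw.gradient_eq_zero, zero_sub, norm_neg] at hLip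
  calc -(L₀ * ‖w - u‖ ^ 2) = -(‖w - u‖ * (L₀ * ‖w - u‖)) := by ring
    _ ≤ -(‖w - u‖ * ‖gradient f u‖) :=
        neg_le_neg (mul_le_mul_of_nonneg_left hLip (norm_nonneg _))
    _ ≤ ⟪w - u, gradient f u⟫ := neg_le_of_abs_le (abs_real_inner_le_norm _ _)

theorem hasGradientAt_add_comp_add_norm_sq {ℓ : E → ℝ} {g : E → E} {P : E →L[ℝ] E}
    (hP : (P : E →ₗ[ℝ] E).IsSymmetric) (hℓ : ∀ v, HasFDerivAt ℓ (innerSL ℝ (g v)) v)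
    (α β γ : ℝ) (u : E) :
    HasGradientAt (fun w => α * ℓ w + β * ℓ (P w) + γ / 2 * ‖w‖ ^ 2)
      (α • g u + β • P (g (P u)) + γ • u) u := by
  rw [hasGradientAt_iff_hasFDerivAt]
  refine ((((hℓ u).const_mul α).add (((hℓ (P u)).comp_isSymmetric hP).const_mul β)).add
    ((hasStrictFDerivAt_norm_sq u).hasFDerivAt.const_mul (γ / 2))).congr_fderiv ?_
  ext v
  simp only [add_apply, smul_apply, coe_innerSL_apply, smul_eq_mul, nsmul_eq_mul, Nat.cast_ofNat,
    map_add, map_smul, InnerProductSpace.toDual_apply_apply]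
  ring

theorem IsLocalMin.neg_mul_sq_le_mul_inner_sub_projection {f ℓ : E → ℝ} {g : E → E}
    {P : E →L[ℝ] E} {α β γ L₀ : ℝ} {w : E} (hP : (P : E →ₗ[ℝ] E).IsSymmetricProjection)
    (hℓ : ∀ v, HasFDerivAt ℓ (innerSL ℝ (g v)) v)
    (hf : f = fun w => α * ℓ w + β * ℓ (P w) + γ / 2 * ‖w‖ ^ 2) (hw : IsLocalMin f w)
    (hLip : ‖gradient f w - gradient f (P w)‖ ≤ L₀ * ‖w - P w‖) :
    -(L₀ * ‖w - P w‖ ^ 2) ≤ α * ⟪w - P w, g (P w)⟫ := by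
  have horth (v : E) : ⟪w - P w, P v⟫ = 0 := by
    simpa using hP.inner_sub_apply_self_apply w v
  have key := hw.neg_mul_sq_le_inner_gradient hLip
  rwa [hf, (hasGradientAt_add_comp_add_norm_sq hP.isSymmetric hℓ α β γ (P w)).gradient,
    inner_add_right, inner_add_right, inner_smul_right, inner_smul_right, inner_smul_right,
    horth, horth, mul_zero, mul_zero, add_zero, add_zero] at key

end Gradient

section CoxLikelihood

variable {E ι : Type*} [NormedAddCommGroup E] [InnerProductSpace ℝ E]

noncomputable def softmaxMean (x : ι → E) (s : Finset ι) (u : E) : E :=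
  (∑ j ∈ s, exp ⟪x j, u⟫)⁻¹ • ∑ j ∈ s, exp ⟪x j, u⟫ • x j

noncomputable def coxLogLik (x : ι → E) (S : Finset ι) (R : ι → Finset ι) (w : E) : ℝ :=
  ∑ i ∈ S, (⟪x i, w⟫ - log (∑ j ∈ R i, exp ⟪x j, w⟫))

noncomputable def coxScore (x : ι → E) (S : Finset ι) (R : ι → Finset ι) (u : E) : E :=
  ∑ i ∈ S, (x i - softmaxMean x (R i) u)

theorem hasFDerivAt_log_sum_exp_inner (x : ι → E) (s : Finset ι) (u : E) :
    HasFDerivAt (fun w => log (∑ j ∈ s, exp ⟪x j, w⟫)) (innerSL ℝ (softmaxMean x s u)) u := by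
  -- for `s = ∅` both sides are junk zeros: `log 0 = 0` and `0⁻¹ • 0 = 0`
  rcases s.eq_empty_or_nonempty with rfl | hs
  · simpa [softmaxMean] using hasFDerivAt_const (0 : ℝ) u
  have hZ : ∑ j ∈ s, exp ⟪x j, u⟫ ≠ 0 := (Finset.sum_pos (fun j _ => exp_pos _) hs).ne'
  have hsum := HasFDerivAt.fun_sum (u := s) fun j _ =>
    (hasDerivAt_exp ⟪x j, u⟫).comp_hasFDerivAt u (innerSL ℝ (x j)).hasFDerivAt
  refine ((hasDerivAt_log hZ).comp_hasFDerivAt u hsum).congr_fderiv ?_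
  ext v
  simp [softmaxMean, Finset.mul_sum]

theorem hasFDerivAt_coxLogLik (x : ι → E) (S : Finset ι) (R : ι → Finset ι) (u : E) :
    HasFDerivAt (coxLogLik x S R) (innerSL ℝ (coxScore x S R u)) u := by
  unfold coxLogLik coxScore
  simpa only [map_sum, map_sub, Pi.sub_apply, innerSL_apply_apply] using
    HasFDerivAt.fun_sum (u := S) fun i _ =>
      (innerSL ℝ (x i)).hasFDerivAt.sub (hasFDerivAt_log_sum_exp_inner x (R i) u)

end CoxLikelihood

theorem excel_theorem_2_general
    (N d : ℕ)
    (x : Fin N → EuclideanSpace ℝ (Fin d))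
    (S : Finset (Fin N))
    (N₁ : ℕ)
    (R : Fin N → Finset (Fin N))
    (K : Finset (Fin d))
    (P : EuclideanSpace ℝ (Fin d) → EuclideanSpace ℝ (Fin d))
    (hP : ∀ w (a : Fin d), P w a = if a ∈ K then w a else 0)
    (lam2 lam3 : ℝ) (hlam2 : 0 < lam2) (hlam3 : 0 < lam3)
    (L : EuclideanSpace ℝ (Fin d) → ℝ)
    (hL : ∀ w, L w =
      -(1 / (N₁ : ℝ)) * ∑ i ∈ S, (⟪x i, w⟫ - Real.log (∑ j ∈ R i, Real.exp ⟪x j, w⟫))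
      - lam2 / (N₁ : ℝ) * ∑ i ∈ S, (⟪x i, P w⟫ - Real.log (∑ j ∈ R i, Real.exp ⟪x j, P w⟫))
      + lam3 / 2 * ‖w‖ ^ 2)
    (m : EuclideanSpace ℝ (Fin d) → Fin N → EuclideanSpace ℝ (Fin d))
    (hm : ∀ u i, m u i =
      (∑ j ∈ R i, Real.exp ⟪x j, u⟫)⁻¹ • ∑ j ∈ R i, Real.exp ⟪x j, u⟫ • x j)
    (wh : EuclideanSpace ℝ (Fin d)) (hwh : ∀ w, L wh ≤ L w)
    (C₁ : ℝ) (hC₁ : 0 ≤ C₁)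
    (hLip : ∀ u v : EuclideanSpace ℝ (Fin d),
      ‖gradient L u - gradient L v‖ ≤ ((1 + lam2) * C₁ + lam3) * ‖u - v‖) :
    ‖wh - P wh‖ ^ 2 ≥ 1 / (((1 + lam2) * C₁ + lam3) * (N₁ : ℝ)) *
      ⟪wh, (∑ i ∈ S, (x i - m (P wh) i)) - P (∑ i ∈ S, (x i - m (P wh) i))⟫ := by
  set L₀ := (1 + lam2) * C₁ + lam3
  have hL₀ : 0 < L₀ := by positivity
  clear_value L₀
  obtain rfl : m = fun u i => softmaxMean x (R i) u := funext fun u => funext (hm u)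
  obtain rfl : P = coordProj K := funext fun w => by ext a; exact hP w a
  have hQ := isSymmetricProjection_coordProj K
  have hL' : L = fun w => -(1 / (N₁ : ℝ)) * coxLogLik x S R w
      + -(lam2 / N₁) * coxLogLik x S R (coordProj K w) + lam3 / 2 * ‖w‖ ^ 2 := by
    funext w
    rw [hL]
    simp only [coxLogLik]
    ring
  have key := IsLocalMin.neg_mul_sq_le_mul_inner_sub_projection hQ (hasFDerivAt_coxLogLik x S R)
    hL' (Filter.Eventually.of_forall hwh) (hLip wh (coordProj K wh))
  have hsymm (v) : ⟪wh, v - coordProj K v⟫ = ⟪wh - coordProj K wh, v⟫ :=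
    hQ.isSymmetric.inner_sub_apply_right wh v
  rw [hsymm, ge_iff_le]
  calc 1 / (L₀ * N₁) * ⟪wh - coordProj K wh, coxScore x S R (coordProj K wh)⟫
      = 1 / N₁ * ⟪wh - coordProj K wh, coxScore x S R (coordProj K wh)⟫ / L₀ := by ring
    _ ≤ ‖wh - coordProj K wh‖ ^ 2 := (div_le_iff₀ hL₀).2 (by linarith)

/-- Theorem 2 of the paper: lower generalization error bound. -/
theorem excel_theorem_2
    (N d k : ℕ) (hN : 0 < N) (hd : 0 < d) (hk : 0 < k) (hkd : k ≤ d)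
    (x : Fin N → EuclideanSpace ℝ (Fin d))
    (E : Fin N → ℕ) (hE : ∀ i, E i = 0 ∨ E i = 1)
    (T : Fin N → ℝ)
    (S : Finset (Fin N)) (hS : S = Finset.univ.filter fun i => E i = 1)
    (hSne : S.Nonempty)
    (N₁ : ℕ) (hN₁ : N₁ = S.card)
    (R : Fin N → Finset (Fin N))
    (hR : ∀ i, R i = Finset.univ.filter fun j => T i ≤ T j)
    (K : Finset (Fin d)) (hK : K.card = k)
    (P : EuclideanSpace ℝ (Fin d) → EuclideanSpace ℝ (Fin d))
    (hP : ∀ w (a : Fin d), P w a = if a ∈ K then w a else 0)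
    (lam2 lam3 : ℝ) (hlam2 : 0 < lam2) (hlam3 : 0 < lam3)
    (L : EuclideanSpace ℝ (Fin d) → ℝ)
    (hL : ∀ w, L w =
      -(1 / (N₁ : ℝ)) * ∑ i ∈ S, (⟪x i, w⟫ - Real.log (∑ j ∈ R i, Real.exp ⟪x j, w⟫))
      - lam2 / (N₁ : ℝ) * ∑ i ∈ S, (⟪x i, P w⟫ - Real.log (∑ j ∈ R i, Real.exp ⟪x j, P w⟫))
      + lam3 / 2 * ‖w‖ ^ 2)
    (m : EuclideanSpace ℝ (Fin d) → Fin N → EuclideanSpace ℝ (Fin d))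
    (hm : ∀ u i, m u i =
      (∑ j ∈ R i, Real.exp ⟪x j, u⟫)⁻¹ • ∑ j ∈ R i, Real.exp ⟪x j, u⟫ • x j)
    (wh : EuclideanSpace ℝ (Fin d)) (hwh : ∀ w, L wh ≤ L w)
    (C₁ : ℝ) (hC₁ : 0 ≤ C₁) (hxC₁ : ∑ i : Fin N, ‖x i‖ ≤ C₁)
    (hLip : ∀ u v : EuclideanSpace ℝ (Fin d),
      ‖gradient L u - gradient L v‖ ≤ ((1 + lam2) * C₁ + lam3) * ‖u - v‖) :
    ‖wh - P wh‖ ^ 2 ≥ 1 / (((1 + lam2) * C₁ + lam3) * (N₁ : ℝ)) *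
      ⟪wh, (∑ i ∈ S, (x i - m (P wh) i)) - P (∑ i ∈ S, (x i - m (P wh) i))⟫ :=
  excel_theorem_2_general N d x S N₁ R K P hP lam2 lam3 hlam2 hlam3 L hL m hm wh hwh C₁ hC₁ hLip
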